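/- The Baxterized elements of ℂG̃_n satisfy the unitarity relation s_i(c,c') s_i(c',c) = 1 − e_{i,i+1}^2/(c−c')^2 for i = 1,...,n−1 and c ≠ c', and the locality relation s_i(c,c') s_j(d,d') = s_j(d,d') s_i(c,c') for |i−j| > 1. -/

import Mathlib

/-- The action of the symmetric group `S_n` on `G^n` permuting the copies of `G`. -/
def permHom (n : ℕ) (G : Type) [Group G] : Equiv.Perm (Fin n) →* MulAut (Fin n → G) where
  toFun σ :=
    { Equiv.arrowCongr σ (Equiv.refl G) with
      map_mul' := fun _ _ => rfl }
  map_one' := MulEquiv.ext fun _ => rfl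
  map_mul' := fun _ _ => MulEquiv.ext fun _ => rfl

/-- The wreath product `G̃_n = G^n ⋊ S_n` of `G` by the symmetric group. -/
abbrev Wreath (n : ℕ) (G : Type) [Group G] :=
  SemidirectProduct (Fin n → G) (Equiv.Perm (Fin n)) (permHom n G)

noncomputable section

/-- The element `s_a` of `ℂG̃_n`: the simple transposition of `a` and `a+1`
(0-based indexing) in the symmetric-group part.  (Junk value `1` out of range.) -/
def sE (n : ℕ) (G : Type) [Group G] (a : ℕ) : MonoidAlgebra ℂ (Wreath n G) :=
  if h : a + 1 < n then
    MonoidAlgebra.of ℂ (Wreath n G)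
      (SemidirectProduct.inr (Equiv.swap ⟨a, Nat.lt_of_succ_lt h⟩ ⟨a + 1, h⟩))
  else 1

/-- The element `e_{i,j} = (1/|G|) Σ_{g ∈ G} g_i g_j⁻¹` of `ℂG̃_n` (0-based indexing),
where `g_i` is the image of `g` in the `i`-th copy of `G`.  (Junk value `1` out of range;
note `e_{i,i} = 1`.) -/
def eE (n : ℕ) (G : Type) [Group G] [Fintype G] (i j : ℕ) : MonoidAlgebra ℂ (Wreath n G) :=
  if h : i < n ∧ j < n then
    ((Fintype.card G : ℂ))⁻¹ • ∑ g : G,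
      MonoidAlgebra.of ℂ (Wreath n G)
        (SemidirectProduct.inl (Pi.mulSingle ⟨i, h.1⟩ g * Pi.mulSingle ⟨j, h.2⟩ g⁻¹))
  else 1

/-- The image `g_l` in `ℂG̃_n` of an element `g ∈ G` placed in the `l`-th copy of `G`
(0-based indexing; junk value `1` out of range). -/
def gE (n : ℕ) (G : Type) [Group G] (l : ℕ) (g : G) : MonoidAlgebra ℂ (Wreath n G) :=
  if h : l < n then
    MonoidAlgebra.of ℂ (Wreath n G) (SemidirectProduct.inl (Pi.mulSingle ⟨l, h⟩ g))
  else 1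

/-- The image `g_i^{(α)}` in `ℂG̃_n` of the normalized class sum
`g^{(α)} = (1/|C_α|) Σ_{g ∈ C_α} g` placed in the `i`-th copy of `G`
(0-based indexing; junk value `1` out of range). -/
def gClassE (n : ℕ) (G : Type) [Group G] [Fintype G] (i : ℕ) (c : ConjClasses G) :
    MonoidAlgebra ℂ (Wreath n G) :=
  if h : i < n then
    (((Set.toFinite (ConjClasses.carrier c)).toFinset.card : ℂ))⁻¹ •
      ∑ g ∈ (Set.toFinite (ConjClasses.carrier c)).toFinset,
        MonoidAlgebra.of ℂ (Wreath n G) (SemidirectProduct.inl (Pi.mulSingle ⟨i, h⟩ g))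
  else 1

end

/-- The Baxterized element `s_a(c,c') = s_a + e_{a,a+1}/(c−c')` of `ℂG̃_n`. -/
noncomputable def sBax (n : ℕ) (G : Type) [Group G] [Fintype G] (a : ℕ) (c c' : ℂ) :
    MonoidAlgebra ℂ (Wreath n G) :=
  sE n G a + (c - c')⁻¹ • eE n G a (a + 1)

/-!
`s_i` is an involution commuting with `e_{i,i+1}`: conjugating `g_i g_{i+1}⁻¹` by the
transposition gives `g_{i+1} g_i⁻¹ = (g⁻¹)_i (g⁻¹)_{i+1}⁻¹`, so it only permutes the terms
of the average. Hence `s_i(c,c') s_i(c',c) = (s + t e)(s - t e) = 1 - t² e²` with `t = (c - c')⁻¹`.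
For `|i - j| > 1` the four generators `s_i, e_{i,i+1}, s_j, e_{j,j+1}` involve disjoint pairs of
coordinates, so they commute pairwise, and so do the Baxterized elements.
-/

section

variable {R A : Type*} [CommSemiring R]

theorem Commute.add_smul_mul_sub_smul [Ring A] [Algebra R A] {s e : A} (hse : Commute s e)
    (hs : s * s = 1) (t : R) :
    (s + t • e) * (s - t • e) = 1 - t ^ 2 • e ^ 2 := by
  rw [add_mul, mul_sub, mul_sub, hs, mul_smul_comm, smul_mul_assoc, smul_mul_smul, hse.eq, sq, sq]
  abel

theorem Commute.add_smul_add_smul [Semiring A] [Algebra R A] {s e s' e' : A}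
    (hss : Commute s s') (hse : Commute s e') (hes : Commute e s') (hee : Commute e e') (t t' : R) :
    Commute (s + t • e) (s' + t' • e') :=
  (hss.add_right (hse.smul_right t')).add_left
    ((hes.smul_left t).add_right ((hee.smul_left t).smul_right t'))

end

namespace Wreath

open SemidirectProduct MonoidAlgebra

variable {n : ℕ} {G : Type} [Group G]

theorem permHom_mulSingle (σ : Equiv.Perm (Fin n)) (i : Fin n) (g : G) :
    permHom n G σ (Pi.mulSingle i g) = Pi.mulSingle (σ i) g :=
  Pi.mulSingle_comp_equiv σ.symm i g

theorem inr_mul_inl (σ : Equiv.Perm (Fin n)) (f : Fin n → G) :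
    (inr σ : Wreath n G) * inl f = inl (permHom n G σ f) * inr σ := by
  rw [inl_aut, mul_assoc, ← map_mul, inv_mul_cancel, map_one, mul_one]

variable (k : Type*) [CommSemiring k]

theorem commute_of_inr_sum_of_inl {ι : Type*} [Fintype ι] (σ : Equiv.Perm (Fin n))
    (F : ι → Fin n → G) (e : ι ≃ ι) (hF : ∀ x, permHom n G σ (F x) = F (e x)) :
    Commute (of k (Wreath n G) (inr σ)) (∑ x, of k (Wreath n G) (inl (F x))) := by
  simp only [Commute, SemiconjBy, Finset.mul_sum, Finset.sum_mul, ← map_mul, inr_mul_inl, hF]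
  exact e.sum_comp fun x => of k (Wreath n G) (inl (F x) * inr σ)

/-- The unnormalised `e_{i,j}`, indexed by `Fin n`. -/
noncomputable def pairSum [Fintype G] (i j : Fin n) : MonoidAlgebra k (Wreath n G) :=
  ∑ g : G, of k (Wreath n G) (inl (Pi.mulSingle i g * Pi.mulSingle j g⁻¹))

variable [Fintype G]

theorem commute_swap_pairSum_self {i j : Fin n} (hij : i ≠ j) :
    Commute (of k (Wreath n G) (inr (Equiv.swap i j))) (pairSum k i j) := by
  refine commute_of_inr_sum_of_inl k _ _ (Equiv.inv G) fun g => ?_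
  rw [map_mul, permHom_mulSingle, permHom_mulSingle, Equiv.swap_apply_left,
    Equiv.swap_apply_right, Equiv.inv_apply, inv_inv]
  exact Pi.mulSingle_commute hij.symm _ _

theorem commute_swap_pairSum_of_ne {i j i' j' : Fin n} (hi'i : i' ≠ i) (hi'j : i' ≠ j)
    (hj'i : j' ≠ i) (hj'j : j' ≠ j) :
    Commute (of k (Wreath n G) (inr (Equiv.swap i j))) (pairSum k i' j') := by
  refine commute_of_inr_sum_of_inl k _ _ (Equiv.refl G) fun g => ?_
  rw [map_mul, permHom_mulSingle, permHom_mulSingle, Equiv.swap_apply_of_ne_of_ne hi'i hi'j,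
    Equiv.swap_apply_of_ne_of_ne hj'i hj'j, Equiv.refl_apply]

theorem commute_pairSum_pairSum {i j i' j' : Fin n} (hii' : i ≠ i') (hij' : i ≠ j')
    (hji' : j ≠ i') (hjj' : j ≠ j') :
    Commute (pairSum k (G := G) i j) (pairSum k i' j') := by
  refine Commute.sum_left _ _ _ fun g _ => Commute.sum_right _ _ _ fun g' _ => ?_
  refine ((Commute.mul_left ?_ ?_).map inl).map (of k (Wreath n G)) <;>
    refine Commute.mul_right ?_ ?_ <;> exact Pi.mulSingle_commute ‹_› _ _

end Wreath

section

open SemidirectProduct MonoidAlgebra Wreath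

variable {n : ℕ} {G : Type} [Group G] {a b : ℕ}

theorem sE_of_lt (h : a + 1 < n) :
    sE n G a = of ℂ (Wreath n G) (inr (Equiv.swap ⟨a, a.lt_of_succ_lt h⟩ ⟨a + 1, h⟩)) :=
  dif_pos h

theorem sE_mul_self (h : a + 1 < n) : sE n G a * sE n G a = 1 := by
  rw [sE_of_lt h, ← map_mul, ← map_mul, Equiv.swap_mul_self, map_one, map_one]

theorem commute_sE_sE_of_far (ha : a + 1 < n) (hb : b + 1 < n) (hab : a + 1 < b ∨ b + 1 < a) :
    Commute (sE n G a) (sE n G b) := by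
  rw [sE_of_lt ha, sE_of_lt hb]
  refine ((Equiv.Perm.Disjoint.commute ?_).map inr).map (of ℂ (Wreath n G))
  exact Equiv.Perm.disjoint_swap_swap (by simp [Fin.ext_iff]; omega)

variable [Fintype G]

theorem eE_succ_of_lt (h : a + 1 < n) :
    eE n G a (a + 1) =
      (Fintype.card G : ℂ)⁻¹ • pairSum ℂ ⟨a, a.lt_of_succ_lt h⟩ ⟨a + 1, h⟩ :=
  dif_pos ⟨a.lt_of_succ_lt h, h⟩

theorem commute_sE_eE_self (h : a + 1 < n) : Commute (sE n G a) (eE n G a (a + 1)) := by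
  rw [sE_of_lt h, eE_succ_of_lt h]
  exact (commute_swap_pairSum_self ℂ (by simp)).smul_right _

theorem commute_sE_eE_of_far (ha : a + 1 < n) (hb : b + 1 < n) (hab : a + 1 < b ∨ b + 1 < a) :
    Commute (sE n G a) (eE n G b (b + 1)) := by
  rw [sE_of_lt ha, eE_succ_of_lt hb]
  refine (commute_swap_pairSum_of_ne ℂ ?_ ?_ ?_ ?_).smul_right _ <;>
    simp [Fin.ext_iff] <;> omega

theorem commute_eE_eE_of_far (ha : a + 1 < n) (hb : b + 1 < n) (hab : a + 1 < b ∨ b + 1 < a) :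
    Commute (eE n G a (a + 1)) (eE n G b (b + 1)) := by
  rw [eE_succ_of_lt ha, eE_succ_of_lt hb]
  refine ((commute_pairSum_pairSum ℂ ?_ ?_ ?_ ?_).smul_left _).smul_right _ <;>
    simp [Fin.ext_iff] <;> omega

end

/-- The Baxterized elements of `ℂG̃_n` satisfy the unitarity relation
`s_i(c,c') s_i(c',c) = 1 − e_{i,i+1}²/(c−c')²` and the locality relation
`s_i(c,c') s_j(d,d') = s_j(d,d') s_i(c,c')` for `|i−j| > 1`. -/
theorem baxterized_unitarity_locality (n : ℕ) (G : Type) [Group G] [Fintype G] :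
    (∀ (a : ℕ), a + 1 < n → ∀ c c' : ℂ, c ≠ c' →
      sBax n G a c c' * sBax n G a c' c =
        1 - ((c - c') ^ 2)⁻¹ • (eE n G a (a + 1)) ^ 2)
    ∧
    (∀ (a b : ℕ), a + 1 < n → b + 1 < n → (a + 1 < b ∨ b + 1 < a) →
      ∀ c c' d d' : ℂ, c ≠ c' → d ≠ d' →
        sBax n G a c c' * sBax n G b d d' = sBax n G b d d' * sBax n G a c c') := by
  refine ⟨fun a ha c c' _ => ?_, fun a b ha hb hab c c' d d' _ _ => ?_⟩
  · have hsub : sBax n G a c' c = sE n G a - (c - c')⁻¹ • eE n G a (a + 1) := by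
      rw [sBax, ← neg_sub c, inv_neg, neg_smul, ← sub_eq_add_neg]
    rw [hsub, sBax, (commute_sE_eE_self ha).add_smul_mul_sub_smul (sE_mul_self ha), inv_pow]
  · exact (Commute.add_smul_add_smul (commute_sE_sE_of_far ha hb hab)
      (commute_sE_eE_of_far ha hb hab) (commute_sE_eE_of_far hb ha hab.symm).symm
      (commute_eE_eE_of_far ha hb hab) _ _).eq
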